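/- arXiv:1307.0910 — 3 statements merged into one kernel-verified Lean document; each statement's English description precedes it below -/
import Mathlib

section
/- In the same setting, the added state is orthogonal to all transformed eigenfunctions: ∫_{x1}^{x2} φ1^{(1)} φ_n^{(1)} = 0, where φ1^{(1)} = φ1/(1+⟨φ1,φ1⟩) and φ_n^{(1)} = φ_n − φ1^{(1)}⟨φ1,φ_n⟩. -/
/-!
Write `Q = ⟨φ1, φ1⟩` and `N = ⟨φ1, φn⟩`. The integrand is the derivative of `N / (1 + Q)`,
which tends to `0` at `x1` (where `N` and `Q` vanish) and at `x2` (where `N` stays bounded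
while `Q → ∞`). It is integrable: `φ1 φn / (1 + Q)` is dominated by `|φ1 φn|`, and
`N φ1² / (1 + Q)²` is the bounded `N` times `φ1² / (1 + Q)²`, the nonnegative derivative of the
bounded function `-1 / (1 + Q)`.
-/

open Set MeasureTheory intervalIntegral Filter
open Topology

section Primitive

variable {f : ℝ → ℝ} {a b : ℝ}

theorem continuousOn_primitive_Icc_of_integrableOn_Ioo (hab : a ≤ b)
    (hf : IntegrableOn f (Ioo a b)) : ContinuousOn (fun x => ∫ t in a..x, f t) (Icc a b) := by
  rw [← uIcc_of_le hab]
  exact continuousOn_primitive_interval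
    (by rwa [uIcc_of_le hab, integrableOn_Icc_iff_integrableOn_Ioo])

theorem tendsto_primitive_nhdsGT (hab : a < b) (hf : IntegrableOn f (Ioo a b)) :
    Tendsto (fun x => ∫ t in a..x, f t) (𝓝[>] a) (𝓝 0) := by
  have hcont := continuousOn_primitive_Icc_of_integrableOn_Ioo hab.le hf a (left_mem_Icc.2 hab.le)
  have hlim := hcont.tendsto
  rw [integral_same] at hlim
  refine hlim.mono_left ?_
  rw [← nhdsWithin_Ioo_eq_nhdsGT hab]
  exact nhdsWithin_mono _ Ioo_subset_Icc_self

theorem hasDerivAt_primitive_of_continuousOn_Ioo {x : ℝ} (hf : ContinuousOn f (Ioo a b))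
    (hx : x ∈ Ioo a b) (hint : IntegrableOn f (Ioo a x)) :
    HasDerivAt (fun y => ∫ t in a..y, f t) (f x) x :=
  integral_hasDerivAt_right
    ((intervalIntegrable_iff_integrableOn_Ioo_of_le hx.1.le).2 hint)
    (hf.stronglyMeasurableAtFilter isOpen_Ioo x hx)
    (hf.continuousAt (isOpen_Ioo.mem_nhds hx))

end Primitive

theorem continuousOn_Icc_update_update {f : ℝ → ℝ} {a b fa fb : ℝ} (hab : a < b)
    (hf : ContinuousOn f (Ioo a b)) (ha : Tendsto f (𝓝[>] a) (𝓝 fa))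
    (hb : Tendsto f (𝓝[<] b) (𝓝 fb)) :
    ContinuousOn (Function.update (Function.update f a fa) b fb) (Icc a b) := by
  rw [continuousOn_update_iff, continuousOn_update_iff, Icc_sdiff_right, Ico_sdiff_left]
  refine ⟨⟨hf, fun _ => ha.mono_left (nhdsWithin_mono _ Ioo_subset_Ioi_self)⟩, fun _ => ?_⟩
  refine (hb.congr' ?_).mono_left (nhdsWithin_mono _ Ico_subset_Iio_self)
  filter_upwards [Ioo_mem_nhdsLT hab] with _ hz using
    (Function.update_of_ne hz.1.ne' _ _).symm

theorem integrableOn_Ioo_deriv_of_nonneg {g g' : ℝ → ℝ} {a b ga gb : ℝ} (hab : a < b)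
    (hderiv : ∀ x ∈ Ioo a b, HasDerivAt g (g' x) x) (hpos : ∀ x ∈ Ioo a b, 0 ≤ g' x)
    (ha : Tendsto g (𝓝[>] a) (𝓝 ga)) (hb : Tendsto g (𝓝[<] b) (𝓝 gb)) :
    IntegrableOn g' (Ioo a b) := by
  have hcont := continuousOn_Icc_update_update hab
    (fun x hx => (hderiv x hx).continuousAt.continuousWithinAt) ha hb
  refine (intervalIntegral.integrableOn_deriv_of_nonneg hcont (fun x hx => ?_) hpos).mono_set
    Ioo_subset_Ioc_self
  refine (hderiv x hx).congr_of_eventuallyEq ?_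
  filter_upwards [Ioo_mem_nhds hx.1 hx.2] with y hy
  rw [Function.update_of_ne hy.2.ne, Function.update_of_ne hy.1.ne']

section OneAddPrimitive

variable {a b : ℝ} {Q N q n : ℝ → ℝ}

theorem integrableOn_deriv_div_one_add_sq (hab : a < b)
    (hQ : ∀ x ∈ Ioo a b, HasDerivAt Q (q x) x) (hq : ∀ x ∈ Ioo a b, 0 ≤ q x)
    (hQ0 : ∀ x ∈ Ioo a b, 0 ≤ Q x) (hQa : Tendsto Q (𝓝[>] a) (𝓝 0))
    (hQb : Tendsto Q (𝓝[<] b) atTop) :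
    IntegrableOn (fun x => q x / (1 + Q x) ^ 2) (Ioo a b) := by
  refine integrableOn_Ioo_deriv_of_nonneg (g := fun x => -(1 + Q x)⁻¹) (ga := -(1 + 0)⁻¹)
    (gb := -0) hab (fun x hx => ?_) (fun x hx => by have := hq x hx; positivity) ?_ ?_
  · have hne : 1 + Q x ≠ 0 := by linarith [hQ0 x hx]
    refine (((hQ x hx).const_add 1).inv hne).neg.congr_deriv ?_
    ring
  · exact ((tendsto_const_nhds.add hQa).inv₀ (by norm_num)).neg
  · exact (tendsto_atTop_add_const_left _ 1 hQb).inv_tendsto_atTop.neg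

theorem integrableOn_deriv_div_one_add (hab : a < b)
    (hQ : ∀ x ∈ Ioo a b, HasDerivAt Q (q x) x) (hq : ∀ x ∈ Ioo a b, 0 ≤ q x)
    (hQ0 : ∀ x ∈ Ioo a b, 0 ≤ Q x) (hQa : Tendsto Q (𝓝[>] a) (𝓝 0))
    (hQb : Tendsto Q (𝓝[<] b) atTop) (hn : IntegrableOn n (Ioo a b))
    (hNc : ContinuousOn N (Icc a b)) :
    IntegrableOn (fun x => n x / (1 + Q x) - N x * q x / (1 + Q x) ^ 2) (Ioo a b) := by
  have hQc : ContinuousOn Q (Ioo a b) := fun x hx => (hQ x hx).continuousAt.continuousWithinAt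
  have hinv : IntegrableOn (fun x => (1 + Q x)⁻¹ * n x) (Ioo a b) := by
    refine hn.bdd_mul (c := 1) ?_ ?_
    · refine ContinuousOn.aestronglyMeasurable ?_ measurableSet_Ioo
      exact (continuousOn_const.add hQc).inv₀ fun x hx => by
        simp only [Pi.add_apply]
        linarith [hQ0 x hx]
    · filter_upwards [ae_restrict_mem measurableSet_Ioo] with x hx
      have := hQ0 x hx
      rw [Real.norm_of_nonneg (by positivity)]
      exact inv_le_one_of_one_le₀ (by linarith)
  obtain ⟨C, hC⟩ := isCompact_Icc.exists_bound_of_continuousOn hNc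
  have hbdd : IntegrableOn (fun x => N x * (q x / (1 + Q x) ^ 2)) (Ioo a b) := by
    refine (integrableOn_deriv_div_one_add_sq hab hQ hq hQ0 hQa hQb).bdd_mul (c := C) ?_ ?_
    · exact (hNc.mono Ioo_subset_Icc_self).aestronglyMeasurable measurableSet_Ioo
    · filter_upwards [ae_restrict_mem measurableSet_Ioo] with x hx
      exact hC x (Ioo_subset_Icc_self hx)
  refine (hinv.sub hbdd).congr (Eventually.of_forall fun x => ?_)
  simp only [Pi.sub_apply]
  ring

theorem integral_Ioo_deriv_div_one_add_eq_zero (hab : a < b)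
    (hQ : ∀ x ∈ Ioo a b, HasDerivAt Q (q x) x) (hq : ∀ x ∈ Ioo a b, 0 ≤ q x)
    (hQ0 : ∀ x ∈ Ioo a b, 0 ≤ Q x) (hQa : Tendsto Q (𝓝[>] a) (𝓝 0))
    (hQb : Tendsto Q (𝓝[<] b) atTop) (hN : ∀ x ∈ Ioo a b, HasDerivAt N (n x) x)
    (hn : IntegrableOn n (Ioo a b)) (hNc : ContinuousOn N (Icc a b)) (hNa : N a = 0) :
    ∫ x in Ioo a b, (n x / (1 + Q x) - N x * q x / (1 + Q x) ^ 2) = 0 := by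
  have hderiv : ∀ x ∈ Ioo a b, HasDerivAt (fun y => N y / (1 + Q y))
      (n x / (1 + Q x) - N x * q x / (1 + Q x) ^ 2) x := by
    intro x hx
    have hne : 1 + Q x ≠ 0 := by linarith [hQ0 x hx]
    refine ((hN x hx).div ((hQ x hx).const_add 1) hne).congr_deriv ?_
    field_simp
  have hlim_a : Tendsto (fun y => N y / (1 + Q y)) (𝓝[>] a) (𝓝 (0 / (1 + 0))) := by
    have hNa' : Tendsto N (𝓝[>] a) (𝓝 0) := by
      rw [← hNa, ← nhdsWithin_Ioo_eq_nhdsGT hab]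
      exact (hNc a (left_mem_Icc.2 hab.le)).mono Ioo_subset_Icc_self
    exact hNa'.div (tendsto_const_nhds.add hQa) (by norm_num)
  have hlim_b : Tendsto (fun y => N y / (1 + Q y)) (𝓝[<] b) (𝓝 (N b * 0)) := by
    have hNb : Tendsto N (𝓝[<] b) (𝓝 (N b)) := by
      rw [← nhdsWithin_Ioo_eq_nhdsLT hab]
      exact (hNc b (right_mem_Icc.2 hab.le)).mono Ioo_subset_Icc_self
    exact hNb.mul (tendsto_atTop_add_const_left _ 1 hQb).inv_tendsto_atTop
  have hint := integrableOn_deriv_div_one_add hab hQ hq hQ0 hQa hQb hn hNc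
  rw [← integral_Ioc_eq_integral_Ioo, ← integral_of_le hab.le,
    integral_eq_sub_of_hasDerivAt_of_tendsto hab hderiv
      ((intervalIntegrable_iff_integrableOn_Ioo_of_le hab.le).2 hint) hlim_a hlim_b]
  simp

end OneAddPrimitive

theorem am_added_state_orthogonal (x1 x2 : ℝ) (hlt : x1 < x2)
    (φ1 φn : ℝ → ℝ)
    (hφ1c : ContinuousOn φ1 (Ioo x1 x2))
    (hφnc : ContinuousOn φn (Ioo x1 x2))
    (hint1 : IntegrableOn (fun y => φ1 y * φn y) (Ioo x1 x2))
    (hint2 : ∀ x ∈ Ioo x1 x2, IntegrableOn (fun y => φ1 y ^ 2) (Ioo x1 x))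
    (hdiv : Tendsto (fun x => ∫ t in x1..x, φ1 t ^ 2)
      (nhdsWithin x2 (Iio x2)) atTop) :
    ∫ y in Ioo x1 x2,
      (φ1 y / (1 + ∫ t in x1..y, φ1 t ^ 2)) *
      (φn y - φ1 y / (1 + ∫ t in x1..y, φ1 t ^ 2) *
          ∫ t in x1..y, φ1 t * φn t) = 0 := by
  obtain ⟨c, hc⟩ := exists_between hlt
  have hQ0 : ∀ x ∈ Ioo x1 x2, 0 ≤ ∫ t in x1..x, φ1 t ^ 2 := fun x hx =>
    integral_nonneg hx.1.le fun t _ => sq_nonneg _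
  rw [← integral_Ioo_deriv_div_one_add_eq_zero (Q := fun x => ∫ t in x1..x, φ1 t ^ 2)
    (N := fun x => ∫ t in x1..x, φ1 t * φn t) (q := fun y => φ1 y ^ 2)
    (n := fun y => φ1 y * φn y) hlt
    (fun x hx => hasDerivAt_primitive_of_continuousOn_Ioo (hφ1c.pow 2) hx (hint2 x hx))
    (fun x _ => sq_nonneg (φ1 x)) hQ0 (tendsto_primitive_nhdsGT hc.1 (hint2 c hc)) hdiv
    (fun x hx => hasDerivAt_primitive_of_continuousOn_Ioo (hφ1c.mul hφnc) hx
      (hint1.mono_set (Ioo_subset_Ioo_right hx.2.le)))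
    hint1 (continuousOn_primitive_Icc_of_integrableOn_Ioo hlt.le hint1) integral_same]
  congr 1 with y
  -- otherwise `ring` expands `(1 + Q) ^ 2` under the inverse
  generalize 1 + ∫ t in x1..y, φ1 t ^ 2 = D
  ring
end

section
/- Multiple-addition product formula: with F as above and transformed functions f^{(M)} = f − Σ_{j,k=1}^M φ_j (F^{-1})_{jk} ⟨φ_k,f⟩, for any continuous f,g with appropriate integrability near x1, f^{(M)}(x) g^{(M)}(x) = f(x)g(x) − d/dx [ Σ_{k,m=1}^M ⟨φ_k,f⟩(x) (F^{-1}(x))_{km} ⟨φ_m,g⟩(x) ]. -/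
open Set MeasureTheory intervalIntegral Matrix

/-- The Abraham–Moses matrix `F(x)` with entries `δ_{jk} + ∫_{x1}^x φ_j φ_k`. -/
noncomputable def amF (x1 : ℝ) {M : ℕ} (φ : Fin M → ℝ → ℝ) (x : ℝ) :
    Matrix (Fin M) (Fin M) ℝ :=
  Matrix.of fun j k => (if j = k then (1 : ℝ) else 0) + ∫ t in x1..x, φ j t * φ k t

/-- The `M`-fold Abraham–Moses transform `f^{(M)} = f − Σ_{j,k} φ_j (F⁻¹)_{jk} ⟨φ_k,f⟩`. -/
noncomputable def amTransform (x1 : ℝ) {M : ℕ} (φ : Fin M → ℝ → ℝ)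
    (f : ℝ → ℝ) (x : ℝ) : ℝ :=
  f x - ∑ j : Fin M, ∑ k : Fin M,
    φ j x * (amF x1 φ x)⁻¹ j k * ∫ t in x1..x, φ k t * f t

/-!
Write the bracket as `a ⬝ᵥ F⁻¹ *ᵥ b` with `a k = ⟨φ_k, f⟩`, `b m = ⟨φ_m, g⟩`, and put `p = φ(x)`.
Then `a' = f p`, `b' = g p` and `F' = p pᵀ`, hence `(F⁻¹)' = -F⁻¹ p pᵀ F⁻¹`. As `F` is symmetric,
the Leibniz rule gives `f (p⬝F⁻¹b) + g (p⬝F⁻¹a) - (p⬝F⁻¹a)(p⬝F⁻¹b) = fg - (f - p⬝F⁻¹a)(g - p⬝F⁻¹b)`,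
whose two factors are `f^{(M)}(x)` and `g^{(M)}(x)`. `F` is invertible because it is the identity
plus a Gram matrix, hence positive definite.
-/

open Filter Topology

theorem intervalIntegral_sq_sum_mul {ι : Type*} [Fintype ι] {φ : ι → ℝ → ℝ} {a b : ℝ}
    (hφ : ∀ j k, IntervalIntegrable (fun t => φ j t * φ k t) volume a b) (v : ι → ℝ) :
    ∫ t in a..b, (∑ j, v j * φ j t) ^ 2 = ∑ j, ∑ k, v j * v k * ∫ t in a..b, φ j t * φ k t :=
  calc ∫ t in a..b, (∑ j, v j * φ j t) ^ 2
      = ∫ t in a..b, ∑ j, ∑ k, v j * v k * (φ j t * φ k t) := by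
        refine intervalIntegral.integral_congr fun t _ => ?_
        simp only [sq, Finset.sum_mul_sum]
        exact Finset.sum_congr rfl fun j _ => Finset.sum_congr rfl fun k _ => by ring
    _ = ∑ j, ∑ k, v j * v k * ∫ t in a..b, φ j t * φ k t := by
        have hsum : ∀ j, IntervalIntegrable (fun t => ∑ k, v j * v k * (φ j t * φ k t))
            volume a b := fun j => by
          simpa only [Finset.sum_fn] using
            IntervalIntegrable.sum Finset.univ fun k _ => (hφ j k).const_mul (v j * v k)
        rw [intervalIntegral.integral_finsetSum fun j _ => hsum j]
        refine Finset.sum_congr rfl fun j _ => ?_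
        rw [intervalIntegral.integral_finsetSum fun k _ => (hφ j k).const_mul (v j * v k)]
        simp only [intervalIntegral.integral_const_mul]

theorem hasDerivAt_intervalIntegral_of_continuousOn_Ioo {E : Type*} [NormedAddCommGroup E]
    [NormedSpace ℝ E] [CompleteSpace E] {h : ℝ → E} {a b x : ℝ}
    (hc : ContinuousOn h (Ioo a b)) (hi : IntegrableOn h (Ioo a x)) (hx : x ∈ Ioo a b) :
    HasDerivAt (fun y => ∫ t in a..y, h t) (h x) x :=
  intervalIntegral.integral_hasDerivAt_right
    ((intervalIntegrable_iff_integrableOn_Ioo_of_le hx.1.le).2 hi)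
    (hc.stronglyMeasurableAtFilter isOpen_Ioo x hx)
    (hc.continuousAt (isOpen_Ioo.mem_nhds hx))

namespace Matrix

theorem dotProduct_mulVec_eq_sum_sum {R n : Type*} [CommSemiring R] [Fintype n]
    (B : Matrix n n R) (u w : n → R) :
    u ⬝ᵥ B *ᵥ w = ∑ i, ∑ j, u i * B i j * w j := by
  simp only [dotProduct, mulVec, Finset.mul_sum, mul_assoc]

theorem dotProduct_mulVec_comm_of_transpose_eq {R n : Type*} [CommSemiring R] [Fintype n]
    {B : Matrix n n R} (hB : Bᵀ = B) (u w : n → R) :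
    u ⬝ᵥ B *ᵥ w = w ⬝ᵥ B *ᵥ u := by
  rw [dotProduct_mulVec, ← vecMul_transpose, hB, dotProduct_comm]

-- The left side is the Leibniz-rule derivative of `a ⬝ᵥ F⁻¹ *ᵥ b` when `B = F⁻¹`, `F' = p pᵀ`,
-- `a' = c • p` and `b' = d • p`.
theorem dotProduct_leibniz_inv_rank_one {R n : Type*} [CommRing R] [Fintype n]
    {B : Matrix n n R} (hB : Bᵀ = B) (p a b : n → R) (c d : R) :
    (c • p) ⬝ᵥ B *ᵥ b + a ⬝ᵥ (-(B * vecMulVec p p * B)) *ᵥ b + a ⬝ᵥ B *ᵥ (d • p) =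
      c * d - (c - p ⬝ᵥ B *ᵥ a) * (d - p ⬝ᵥ B *ᵥ b) := by
  have hrank_one : (B * vecMulVec p p * B) *ᵥ b = (p ⬝ᵥ B *ᵥ b) • B *ᵥ p := by
    rw [← mulVec_mulVec, ← mulVec_mulVec, vecMulVec_mulVec, op_smul_eq_smul, mulVec_smul]
  rw [neg_mulVec, hrank_one, dotProduct_neg, dotProduct_smul, mulVec_smul, dotProduct_smul,
    smul_dotProduct, dotProduct_mulVec_comm_of_transpose_eq hB a p, smul_eq_mul, smul_eq_mul,
    smul_eq_mul]
  ring

section Calculus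

variable {𝕜 n : Type*} [NontriviallyNormedField 𝕜] [Fintype n]

-- The slope of `A⁻¹` is `-(A y)⁻¹ * slope A * (A x)⁻¹`, which converges since inversion is
-- continuous at an invertible matrix.
theorem hasDerivAt_inv_apply [DecidableEq n] {A : 𝕜 → Matrix n n 𝕜} {A' : Matrix n n 𝕜}
    {x : 𝕜} (hA : ∀ i j, HasDerivAt (fun y => A y i j) (A' i j) x) (hx : (A x).det ≠ 0)
    (i j : n) :
    HasDerivAt (fun y => (A y)⁻¹ i j) (-((A x)⁻¹ * A' * (A x)⁻¹) i j) x := by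
  have hAc : ContinuousAt A x :=
    continuousAt_pi.2 fun i => continuousAt_pi.2 fun j => (hA i j).continuousAt
  have hdet_inv : ContinuousAt Ring.inverse (A x).det := by
    simpa only [Ring.inverse_eq_inv'] using continuousAt_inv₀ hx
  have hinv : ContinuousAt (fun y => (A y)⁻¹) x :=
    (continuousAt_matrix_inv _ hdet_inv).comp (f := A) hAc
  have hdet : ∀ᶠ y in 𝓝[≠] x, (A y).det ≠ 0 :=
    nhdsWithin_le_nhds ((continuous_id.matrix_det.continuousAt.comp hAc).eventually_ne hx)
  have hslope : Tendsto (fun y => (y - x)⁻¹ • (A y - A x)) (𝓝[≠] x) (𝓝 A') :=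
    tendsto_pi_nhds.2 fun i => tendsto_pi_nhds.2 fun j => by
      simpa [slope_fun_def] using (hA i j).tendsto_slope
  rw [hasDerivAt_iff_tendsto_slope]
  refine Tendsto.congr' ?_ ((((hinv.tendsto.mono_left nhdsWithin_le_nhds).mul hslope).mul
    tendsto_const_nhds).neg.apply_nhds i |>.apply_nhds j)
  filter_upwards [hdet] with y hy
  have hresolvent : -((A y)⁻¹ * ((y - x)⁻¹ • (A y - A x)) * (A x)⁻¹) =
      (y - x)⁻¹ • ((A y)⁻¹ - (A x)⁻¹) := by
    rw [Matrix.mul_smul, Matrix.smul_mul, ← smul_neg, Matrix.mul_sub, Matrix.sub_mul,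
      nonsing_inv_mul _ (isUnit_iff_ne_zero.2 hy), Matrix.mul_assoc,
      mul_nonsing_inv _ (isUnit_iff_ne_zero.2 hx), Matrix.one_mul, Matrix.mul_one, neg_sub]
  rw [hresolvent, slope_def_module]
  rfl

theorem hasDerivAt_sum_sum_mul_mul {u w : 𝕜 → n → 𝕜} {B : 𝕜 → Matrix n n 𝕜}
    {u' w' : n → 𝕜} {B' : Matrix n n 𝕜} {x : 𝕜}
    (hu : ∀ i, HasDerivAt (fun y => u y i) (u' i) x)
    (hB : ∀ i j, HasDerivAt (fun y => B y i j) (B' i j) x)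
    (hw : ∀ j, HasDerivAt (fun y => w y j) (w' j) x) :
    HasDerivAt (fun y => ∑ i, ∑ j, u y i * B y i j * w y j)
      (u' ⬝ᵥ B x *ᵥ w x + u x ⬝ᵥ B' *ᵥ w x + u x ⬝ᵥ B x *ᵥ w') x := by
  have h : HasDerivAt (fun y => ∑ i, ∑ j, u y i * B y i j * w y j)
      (∑ i, ∑ j, ((u' i * B x i j + u x i * B' i j) * w x j + u x i * B x i j * w' j)) x :=
    HasDerivAt.fun_sum fun i _ => HasDerivAt.fun_sum fun j _ =>
      ((hu i).mul (hB i j)).mul (hw j)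
  convert h using 1
  simp only [dotProduct_mulVec_eq_sum_sum, ← Finset.sum_add_distrib]
  exact Finset.sum_congr rfl fun i _ => Finset.sum_congr rfl fun j _ => by ring

end Calculus

theorem posSemidef_of_intervalIntegral_mul {ι : Type*} [Fintype ι] {φ : ι → ℝ → ℝ}
    {a b : ℝ} (hab : a ≤ b)
    (hφ : ∀ j k, IntervalIntegrable (fun t => φ j t * φ k t) volume a b) :
    (of fun j k => ∫ t in a..b, φ j t * φ k t).PosSemidef := by
  refine .of_dotProduct_mulVec_nonneg ?_ fun v => ?_
  · ext j k
    simp only [conjTranspose_apply, of_apply, star_trivial]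
    exact intervalIntegral.integral_congr fun t _ => mul_comm _ _
  · have hquad : star v ⬝ᵥ (of fun j k => ∫ t in a..b, φ j t * φ k t) *ᵥ v =
        ∫ t in a..b, (∑ j, v j * φ j t) ^ 2 := by
      rw [intervalIntegral_sq_sum_mul hφ, dotProduct_mulVec_eq_sum_sum]
      simp only [star_trivial, of_apply]
      exact Finset.sum_congr rfl fun j _ => Finset.sum_congr rfl fun k _ => by ring
    rw [hquad]
    exact intervalIntegral.integral_nonneg hab fun t _ => sq_nonneg _

end Matrix

theorem amF_eq_one_add (x1 : ℝ) {M : ℕ} (φ : Fin M → ℝ → ℝ) (x : ℝ) :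
    amF x1 φ x = 1 + of fun j k => ∫ t in x1..x, φ j t * φ k t := by
  ext j k
  simp [amF, one_apply]

theorem amF_posDef {x1 x : ℝ} {M : ℕ} {φ : Fin M → ℝ → ℝ} (hx : x1 ≤ x)
    (hφ : ∀ j k, IntervalIntegrable (fun t => φ j t * φ k t) volume x1 x) :
    (amF x1 φ x).PosDef := by
  rw [amF_eq_one_add]
  exact PosDef.one.add_posSemidef (posSemidef_of_intervalIntegral_mul hx hφ)

theorem hasDerivAt_amF_apply {x1 x2 x : ℝ} {M : ℕ} {φ : Fin M → ℝ → ℝ}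
    (hφc : ∀ j, ContinuousOn (φ j) (Ioo x1 x2))
    (hφ : ∀ j k, IntegrableOn (fun y => φ j y * φ k y) (Ioo x1 x)) (hx : x ∈ Ioo x1 x2)
    (j k : Fin M) :
    HasDerivAt (fun y => amF x1 φ y j k) (vecMulVec (φ · x) (φ · x) j k) x :=
  (hasDerivAt_intervalIntegral_of_continuousOn_Ioo ((hφc j).mul (hφc k)) (hφ j k) hx).const_add _

theorem amTransform_eq_sub_dotProduct (x1 : ℝ) {M : ℕ} (φ : Fin M → ℝ → ℝ) (f : ℝ → ℝ)
    (x : ℝ) :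
    amTransform x1 φ f x =
      f x - (φ · x) ⬝ᵥ (amF x1 φ x)⁻¹ *ᵥ fun k => ∫ t in x1..x, φ k t * f t := by
  rw [amTransform, dotProduct_mulVec_eq_sum_sum]

theorem am_multi_product_identity (x1 x2 : ℝ) (M : ℕ) (φ : Fin M → ℝ → ℝ)
    (f g : ℝ → ℝ)
    (hφc : ∀ j, ContinuousOn (φ j) (Ioo x1 x2))
    (hf : ContinuousOn f (Ioo x1 x2))
    (hg : ContinuousOn g (Ioo x1 x2))
    (hintφ : ∀ j k, ∀ x ∈ Ioo x1 x2,
      IntegrableOn (fun y => φ j y * φ k y) (Ioo x1 x))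
    (hintf : ∀ j, ∀ x ∈ Ioo x1 x2,
      IntegrableOn (fun y => φ j y * f y) (Ioo x1 x))
    (hintg : ∀ j, ∀ x ∈ Ioo x1 x2,
      IntegrableOn (fun y => φ j y * g y) (Ioo x1 x)) :
    ∀ x ∈ Ioo x1 x2,
      HasDerivAt
        (fun y => ∑ k : Fin M, ∑ m : Fin M,
          (∫ t in x1..y, φ k t * f t) * (amF x1 φ y)⁻¹ k m *
            ∫ t in x1..y, φ m t * g t)
        (f x * g x - amTransform x1 φ f x * amTransform x1 φ g x) x := by
  intro x hx
  have hφφ : ∀ j k, IntervalIntegrable (fun t => φ j t * φ k t) volume x1 x := fun j k =>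
    (intervalIntegrable_iff_integrableOn_Ioo_of_le hx.1.le).2 (hintφ j k x hx)
  have hpos := amF_posDef hx.1.le hφφ
  have hsymm : ((amF x1 φ x)⁻¹)ᵀ = (amF x1 φ x)⁻¹ := by
    simpa only [conjTranspose_eq_transpose_of_trivial] using hpos.isHermitian.inv.eq
  have hmoment : ∀ h : ℝ → ℝ, ContinuousOn h (Ioo x1 x2) →
      (∀ j, IntegrableOn (fun y => φ j y * h y) (Ioo x1 x)) → ∀ k,
      HasDerivAt (fun y => ∫ t in x1..y, φ k t * h t) ((h x • (φ · x)) k) x := fun h hc hi k =>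
    (hasDerivAt_intervalIntegral_of_continuousOn_Ioo ((hφc k).mul hc) (hi k) hx).congr_deriv
      (mul_comm _ _)
  have hderiv := hasDerivAt_sum_sum_mul_mul (hmoment f hf (hintf · x hx))
    (hasDerivAt_inv_apply (hasDerivAt_amF_apply hφc (hintφ · · x hx) hx)
      hpos.det_pos.ne') (hmoment g hg (hintg · x hx))
  refine hderiv.congr_deriv ?_
  rw [amTransform_eq_sub_dotProduct, amTransform_eq_sub_dotProduct,
    ← dotProduct_leibniz_inv_rank_one hsymm]
  rfl
end

section
/- Deletion followed by addition is the identity on the region where it is defined: let φ_d be continuous with ⟨φ_d,φ_d⟩(x) < 1 for all x < x2, and set ψ = φ_d/(1−⟨φ_d,φ_d⟩). Then (1−⟨φ_d,φ_d⟩(x))(1+⟨ψ,ψ⟩(x)) = 1 for all x, and ψ/(1+⟨ψ,ψ⟩) = φ_d. -/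
/-!
With `F(t) = ∫_{x₁}^t φ_d²`, the function `(1 - F)⁻¹` has derivative `φ_d² / (1 - F)² = ψ²`,
so `1 + ⟨ψ,ψ⟩ = (1 - F)⁻¹` by the fundamental theorem of calculus; both identities are
immediate from this. Integrability of `ψ²` is automatic since it is a nonnegative derivative.
-/

open Set MeasureTheory intervalIntegral

theorem hasDerivAt_inv_one_sub {F : ℝ → ℝ} {c t : ℝ} (hF : HasDerivAt F (c ^ 2) t)
    (hne : F t ≠ 1) : HasDerivAt (fun u => (1 - F u)⁻¹) ((c / (1 - F t)) ^ 2) t := by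
  have h := (hF.const_sub 1).inv (sub_ne_zero.mpr hne.symm)
  rwa [neg_neg, ← div_pow] at h

theorem integral_sq_div_one_sub {a b : ℝ} (hab : a ≤ b) {F φ : ℝ → ℝ}
    (hF : ContinuousOn F (Icc a b)) (hderiv : ∀ t ∈ Ioo a b, HasDerivAt F (φ t ^ 2) t)
    (hne : ∀ t ∈ Icc a b, F t ≠ 1) :
    ∫ t in a..b, (φ t / (1 - F t)) ^ 2 = (1 - F b)⁻¹ - (1 - F a)⁻¹ := by
  have hG : ContinuousOn (fun t => (1 - F t)⁻¹) (Icc a b) :=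
    (continuousOn_const.sub hF).inv₀ fun t ht => sub_ne_zero.mpr (hne t ht).symm
  have hG' : ∀ t ∈ Ioo a b, HasDerivAt (fun u => (1 - F u)⁻¹) ((φ t / (1 - F t)) ^ 2) t :=
    fun t ht => hasDerivAt_inv_one_sub (hderiv t ht) (hne t (Ioo_subset_Icc_self ht))
  have hint : IntervalIntegrable (fun t => (φ t / (1 - F t)) ^ 2) volume a b := by
    rw [intervalIntegrable_iff_integrableOn_Ioc_of_le hab]
    exact integrableOn_deriv_of_nonneg hG hG' fun t _ => sq_nonneg _
  exact integral_eq_sub_of_hasDerivAt_of_le hab hG hG' hint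

theorem hasDerivAt_primitive_of_continuousOn {f : ℝ → ℝ} {a b t : ℝ}
    (hf : ContinuousOn f (Ioo a b)) (hint : IntegrableOn f (Ioo a t)) (ht : t ∈ Ioo a b) :
    HasDerivAt (fun u => ∫ s in a..u, f s) (f t) t :=
  integral_hasDerivAt_right
    ((intervalIntegrable_iff_integrableOn_Ioo_of_le ht.1.le).mpr hint)
    (hf.stronglyMeasurableAtFilter isOpen_Ioo t ht)
    (hf.continuousAt (Ioo_mem_nhds ht.1 ht.2))

theorem am_delete_then_add (x1 x2 : ℝ) (φd : ℝ → ℝ)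
    (hcont : ContinuousOn φd (Ioo x1 x2))
    (hint : ∀ x ∈ Ioo x1 x2, IntegrableOn (fun y => φd y ^ 2) (Ioo x1 x))
    (hlt1 : ∀ x ∈ Ioo x1 x2, (∫ t in x1..x, φd t ^ 2) < 1) :
    ∀ x ∈ Ioo x1 x2,
      (1 - ∫ t in x1..x, φd t ^ 2) *
        (1 + ∫ t in x1..x, (φd t / (1 - ∫ s in x1..t, φd s ^ 2)) ^ 2) = 1 ∧
      (φd x / (1 - ∫ t in x1..x, φd t ^ 2)) /
        (1 + ∫ t in x1..x, (φd t / (1 - ∫ s in x1..t, φd s ^ 2)) ^ 2) =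
        φd x := by
  intro x hx
  set F : ℝ → ℝ := fun t => ∫ s in x1..t, φd s ^ 2
  have hFcont : ContinuousOn F (Icc x1 x) := by
    have h := continuousOn_primitive_interval (μ := volume) (f := fun y => φd y ^ 2)
      (a := x1) (b := x)
      (by rw [uIcc_of_le hx.1.le, integrableOn_Icc_iff_integrableOn_Ioo]; exact hint x hx)
    rwa [uIcc_of_le hx.1.le] at h
  have hFderiv : ∀ t ∈ Ioo x1 x, HasDerivAt F (φd t ^ 2) t := fun t ht =>
    have ht' : t ∈ Ioo x1 x2 := ⟨ht.1, ht.2.trans hx.2⟩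
    hasDerivAt_primitive_of_continuousOn (hcont.pow 2) (hint t ht') ht'
  have hFne : ∀ t ∈ Icc x1 x, F t ≠ 1 := by
    intro t ht
    rcases ht.1.eq_or_lt with rfl | h
    · simp [F]
    · exact (hlt1 t ⟨h, ht.2.trans_lt hx.2⟩).ne
  have hψ := integral_sq_div_one_sub hx.1.le hFcont hFderiv hFne
  have hF1 : F x1 = 0 := integral_same
  have hFx : 1 - F x ≠ 0 := sub_ne_zero.mpr (hFne x ⟨hx.1.le, le_rfl⟩).symm
  rw [hF1, sub_zero, inv_one] at hψ
  rw [hψ, add_sub_cancel]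
  exact ⟨mul_inv_cancel₀ hFx, by rw [div_inv_eq_mul, div_mul_cancel₀ _ hFx]⟩
end
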